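/- arXiv:2107.12555 — 3 statements merged into one kernel-verified Lean document; each statement's English description precedes it below -/
import Mathlib

section
/- Let p ≥ 2 be an integer and s : ℕ → ℕ a sequence with s 1 ≥ 1 and s_{n+1} ≥ p·s_n for all n ≥ 1. Define d_n = p^{n-1}·s_n − Σ_{j=1}^{n-1} (p^j − p^{j-1})·s_j. Then d_n ≥ 1 for all n ≥ 1, and d_{n+1} ≥ (p² − p + 1)·d_n for all n ≥ 1. -/
/-!
The lower breaks satisfy `d₁ = s₁` and `d_{n+1} - d_n = p^n (s_{n+1} - s_n)`. Since
`s_{n+1} ≥ p s_n`, this increment is at least `(p² - p) p^{n-1} s_n`, which is nonnegative (so the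
`d_n` never drop below `d₁ = s₁ ≥ 1`) and at least `(p² - p) d_n`, because `d_n` is `p^{n-1} s_n`
minus a sum of nonnegative terms.
-/

section LowerBreak

variable {R : Type*} [CommRing R]

def lowerBreak (p : R) (s : ℕ → R) (n : ℕ) : R :=
  p ^ (n - 1) * s n - ∑ j ∈ Finset.Ico 1 n, (p ^ j - p ^ (j - 1)) * s j

variable {p : R} {s : ℕ → R}

@[simp]
theorem lowerBreak_one : lowerBreak p s 1 = s 1 := by
  simp [lowerBreak]

theorem lowerBreak_succ {n : ℕ} (hn : 1 ≤ n) :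
    lowerBreak p s (n + 1) = lowerBreak p s n + p ^ n * (s (n + 1) - s n) := by
  rw [lowerBreak, lowerBreak, Finset.sum_Ico_succ_top hn, Nat.add_sub_cancel]
  ring

variable [LinearOrder R] [IsStrictOrderedRing R]

theorem lowerBreak_le_pow_mul (hp : 1 ≤ p) (hs₀ : ∀ n, 0 ≤ s n) (n : ℕ) :
    lowerBreak p s n ≤ p ^ (n - 1) * s n := by
  refine sub_le_self _ (Finset.sum_nonneg fun j hj => mul_nonneg ?_ (hs₀ j))
  exact sub_nonneg.2 (pow_le_pow_right₀ hp (Nat.sub_le j 1))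

theorem mul_pow_mul_le_lowerBreak_succ_sub (hp : 1 ≤ p) (hs : ∀ n, 1 ≤ n → p * s n ≤ s (n + 1))
    {n : ℕ} (hn : 1 ≤ n) :
    (p ^ 2 - p) * (p ^ (n - 1) * s n) ≤ lowerBreak p s (n + 1) - lowerBreak p s n := by
  have hpow : p ^ n = p ^ (n - 1) * p := by rw [← pow_succ, Nat.sub_add_cancel hn]
  rw [lowerBreak_succ hn, add_sub_cancel_left, hpow]
  calc (p ^ 2 - p) * (p ^ (n - 1) * s n) = p ^ (n - 1) * p * (p * s n - s n) := by ring
    _ ≤ p ^ (n - 1) * p * (s (n + 1) - s n) := by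
      gcongr
      exact hs n hn

theorem one_le_lowerBreak (hp : 1 ≤ p) (hs₀ : ∀ n, 0 ≤ s n) (hs₁ : 1 ≤ s 1)
    (hs : ∀ n, 1 ≤ n → p * s n ≤ s (n + 1)) {n : ℕ} (hn : 1 ≤ n) : 1 ≤ lowerBreak p s n := by
  induction n, hn using Nat.le_induction with
  | base => simpa using hs₁
  | succ n hn ih =>
    have hinc := mul_pow_mul_le_lowerBreak_succ_sub hp hs hn
    have hp₀ : 0 ≤ p := zero_le_one.trans hp
    have : 0 ≤ (p ^ 2 - p) * (p ^ (n - 1) * s n) :=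
      mul_nonneg (by nlinarith) (mul_nonneg (pow_nonneg hp₀ _) (hs₀ n))
    linarith

theorem mul_lowerBreak_le_lowerBreak_succ (hp : 1 ≤ p) (hs₀ : ∀ n, 0 ≤ s n)
    (hs : ∀ n, 1 ≤ n → p * s n ≤ s (n + 1)) {n : ℕ} (hn : 1 ≤ n) :
    (p ^ 2 - p + 1) * lowerBreak p s n ≤ lowerBreak p s (n + 1) := by
  have hinc := mul_pow_mul_le_lowerBreak_succ_sub hp hs hn
  have : (p ^ 2 - p) * lowerBreak p s n ≤ (p ^ 2 - p) * (p ^ (n - 1) * s n) :=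
    mul_le_mul_of_nonneg_left (lowerBreak_le_pow_mul hp hs₀ n) (by nlinarith)
  linarith

end LowerBreak

theorem lower_break_growth (p : ℕ) (hp : 2 ≤ p) (s : ℕ → ℕ) (hs1 : 1 ≤ s 1)
    (hs : ∀ n, 1 ≤ n → p * s n ≤ s (n + 1)) (d : ℕ → ℤ)
    (hd : ∀ n, d n = (p : ℤ) ^ (n - 1) * (s n : ℤ) -
      ∑ j ∈ Finset.Ico 1 n, ((p : ℤ) ^ j - (p : ℤ) ^ (j - 1)) * (s j : ℤ)) :
    (∀ n, 1 ≤ n → 1 ≤ d n) ∧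
      (∀ n, 1 ≤ n → ((p : ℤ) ^ 2 - (p : ℤ) + 1) * d n ≤ d (n + 1)) := by
  obtain rfl : d = lowerBreak (p : ℤ) (fun n => (s n : ℤ)) := funext hd
  have hp₁ : (1 : ℤ) ≤ p := by exact_mod_cast (by omega : 1 ≤ p)
  have hs₀ : ∀ n, (0 : ℤ) ≤ s n := fun n => Int.natCast_nonneg _
  have hs' : ∀ n, 1 ≤ n → (p : ℤ) * s n ≤ s (n + 1) := fun n hn => by exact_mod_cast hs n hn
  exact ⟨fun n hn => one_le_lowerBreak hp₁ hs₀ (by exact_mod_cast hs1) hs' hn,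
    fun n hn => mul_lowerBreak_le_lowerBreak_succ hp₁ hs₀ hs' hn⟩
end

section
/- Let p > 1 be a real number and set t = (p+1)/(p−1). Then the series Σ_{i=1}^{∞} i / ((i+t)³ − (i+t)) converges and its sum equals (p−1)/(2(p+1)). -/
/-!
With `x = i + 1 + t`, the summand is `(x - t) / ((x - 1) x (x + 1))`, whose partial fraction
decomposition `((1 - t) / 2) / (x - 1) + t / x - ((1 + t) / 2) / (x + 1)` has coefficients summing
to zero. Hence the series telescopes, with tails `cubeSumTail t n → 0`, and its sum is
`cubeSumTail t 0 = 1 / (2 t)`, which is `(p - 1) / (2 (p + 1))` for `t = (p + 1) / (p - 1)`.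
-/

open Filter Topology

theorem hasSum_sub_succ_of_nonneg {g : ℕ → ℝ} (hg_succ : ∀ n, 0 ≤ g n - g (n + 1))
    (hg : Tendsto g atTop (𝓝 0)) : HasSum (fun n ↦ g n - g (n + 1)) (g 0) := by
  rw [hasSum_iff_tendsto_nat_of_nonneg hg_succ]
  simp_rw [Finset.sum_range_sub']
  simpa using tendsto_const_nhds.sub hg

noncomputable def cubeSumTail (t : ℝ) (n : ℕ) : ℝ :=
  (1 - t) / 2 / (n + t) + (1 + t) / 2 / (n + t + 1)

theorem tendsto_cubeSumTail (t : ℝ) : Tendsto (cubeSumTail t) atTop (𝓝 0) := by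
  have h₁ : Tendsto (fun n : ℕ ↦ (n : ℝ) + t) atTop atTop :=
    tendsto_atTop_add_const_right _ _ tendsto_natCast_atTop_atTop
  have h₂ : Tendsto (fun n : ℕ ↦ (n : ℝ) + t + 1) atTop atTop :=
    tendsto_atTop_add_const_right _ _ h₁
  unfold cubeSumTail
  simpa using (tendsto_const_nhds.div_atTop h₁).add (tendsto_const_nhds.div_atTop h₂)

theorem cubeSumTail_zero {t : ℝ} (ht : 0 < t) : cubeSumTail t 0 = (2 * t)⁻¹ := by
  have : t + 1 ≠ 0 := by positivity
  simp only [cubeSumTail, Nat.cast_zero, zero_add]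
  field_simp
  ring

theorem succ_add_cube_sub_self (t : ℝ) (n : ℕ) :
    ((n : ℝ) + 1 + t) ^ 3 - ((n : ℝ) + 1 + t)
      = ((n : ℝ) + t) * ((n : ℝ) + 1 + t) * ((n : ℝ) + t + 2) := by
  ring

theorem cubeSumTail_sub_succ {t : ℝ} (ht : 0 < t) (n : ℕ) :
    cubeSumTail t n - cubeSumTail t (n + 1)
      = ((n : ℝ) + 1) / (((n : ℝ) + 1 + t) ^ 3 - ((n : ℝ) + 1 + t)) := by
  have h₀ : (n : ℝ) + t ≠ 0 := by positivity
  have h₁ : (n : ℝ) + t + 1 ≠ 0 := by positivity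
  have h₂ : (n : ℝ) + t + 2 ≠ 0 := by positivity
  rw [succ_add_cube_sub_self]
  simp only [cubeSumTail, Nat.cast_add, Nat.cast_one]
  field_simp
  ring

theorem succ_div_cube_sub_nonneg {t : ℝ} (ht : 0 ≤ t) (n : ℕ) :
    0 ≤ ((n : ℝ) + 1) / (((n : ℝ) + 1 + t) ^ 3 - ((n : ℝ) + 1 + t)) := by
  rw [succ_add_cube_sub_self]
  positivity

theorem hasSum_succ_div_cube_sub {t : ℝ} (ht : 0 < t) :
    HasSum (fun n : ℕ ↦ ((n : ℝ) + 1) / (((n : ℝ) + 1 + t) ^ 3 - ((n : ℝ) + 1 + t)))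
      (2 * t)⁻¹ := by
  simp_rw [← cubeSumTail_sub_succ ht, ← cubeSumTail_zero ht]
  refine hasSum_sub_succ_of_nonneg (fun n ↦ ?_) (tendsto_cubeSumTail t)
  simpa only [cubeSumTail_sub_succ ht] using succ_div_cube_sub_nonneg ht.le n

theorem beta_weighted_sum (p : ℝ) (hp : 1 < p) (t : ℝ) (ht : t = (p + 1) / (p - 1)) :
    HasSum (fun i : ℕ => ((i : ℝ) + 1) / ((((i : ℝ) + 1) + t) ^ 3 - (((i : ℝ) + 1) + t)))
      ((p - 1) / (2 * (p + 1))) := by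
  have hp₁ : 0 < p - 1 := sub_pos.mpr hp
  have ht_pos : 0 < t := by rw [ht]; exact div_pos (by linarith) hp₁
  convert hasSum_succ_div_cube_sub ht_pos using 1
  rw [ht]
  field_simp
end

section
/- Let d ≥ 1 be an odd integer and for i ≥ 1 set s_i = (d+2)·2^{i-1} − 2 if i is odd and s_i = (d+2)·2^{i-1} − 1 if i is even. Define g_n for n ≥ 1 by 2·g_n − 2 = −2·2^n + Σ_{i=1}^{n} 2^{i-1}·(s_i + 1). Then for all n ≥ 1, g_n = ((d+1)/2)·(2^{2n} − 1)/3 + 2^{n-1}·⌊(2^n − 7)/3⌋ + 1, where the floor is the integer floor of the rational number (2^n−7)/3 (which may be negative). -/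
/-!
Writing `ε i` for `1` if `i` is odd and `0` otherwise, we have `s i + 1 = (d + 2) 2^(i-1) - ε i`,
so the Riemann–Hurwitz sum is a geometric sum in `4` minus `∑_{i ≤ n odd} 2^(i-1)`, which equals
`(2^n (1 + ε n) - 1) / 3`. On the other side `2^n ≡ (-1)^n [ZMOD 3]` gives
`3 ⌊(2^n - 7) / 3⌋ = 2^n - 7 - ε n`, and the two closed forms agree identically in `d`.
-/

theorem three_mul_floor_two_pow_sub_seven_div_three (n : ℕ) :
    3 * ⌊((2 : ℚ) ^ n - 7) / 3⌋ = 2 ^ n - 7 - if Odd n then 1 else 0 := by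
  have hfloor : ⌊((2 : ℚ) ^ n - 7) / 3⌋ = (2 ^ n - 7) / 3 := by
    exact_mod_cast Rat.floor_intCast_div_natCast ((2 : ℤ) ^ n - 7) 3
  have hmod : ((2 : ℤ) ^ n - 7) % 3 = ((-1) ^ n - 7) % 3 :=
    ((show (2 : ℤ) ≡ -1 [ZMOD 3] by decide).pow n).sub_right 7
  have hdiv := Int.mul_ediv_add_emod ((2 : ℤ) ^ n - 7) 3
  rw [hfloor]
  rcases Nat.even_or_odd n with hn | hn
  · rw [hn.neg_one_pow] at hmod
    simp only [Nat.not_odd_iff_even.mpr hn, if_false]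
    omega
  · rw [hn.neg_one_pow] at hmod
    simp only [hn, if_true]
    omega

theorem three_mul_sum_Icc_two_pow_mul_sub_ite_odd {R : Type*} [CommRing R] (c : R) (n : ℕ) :
    3 * ∑ i ∈ Finset.Icc 1 n, (2 : R) ^ (i - 1) * (c * 2 ^ (i - 1) - if Odd i then 1 else 0) =
      c * (2 ^ (2 * n) - 1) - (2 ^ n * (1 + if Odd n then 1 else 0) - 1) := by
  induction n with
  | zero => simp
  | succ n ih =>
    rw [Finset.sum_Icc_succ_top (Nat.le_add_left 1 n), mul_add, ih, Nat.add_sub_cancel]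
    by_cases h : Odd n
    · simp only [h, Nat.odd_add_one, not_true, if_true, if_false]; ring
    · simp only [h, Nat.odd_add_one, not_false_eq_true, if_true, if_false]; ring

theorem periodic_monodromy_genus_general (d : ℤ)
    (s : ℕ → ℤ)
    (hs : ∀ i, 1 ≤ i → s i = if Odd i then (d + 2) * 2 ^ (i - 1) - 2 else (d + 2) * 2 ^ (i - 1) - 1)
    (g : ℕ → ℚ)
    (hg : ∀ n, 1 ≤ n → 2 * g n - 2 = -2 * 2 ^ n +
      ∑ i ∈ Finset.Icc 1 n, (2 : ℚ) ^ (i - 1) * ((s i : ℚ) + 1)) :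
    ∀ n, 1 ≤ n → g n = (((d : ℚ) + 1) / 2) * ((2 ^ (2 * n) - 1) / 3) +
      2 ^ (n - 1) * ((⌊((2 ^ n - 7 : ℚ)) / 3⌋ : ℤ) : ℚ) + 1 := by
  intro n hn
  obtain ⟨m, rfl⟩ := Nat.exists_eq_add_of_le' hn
  have hterm : ∀ i ∈ Finset.Icc 1 (m + 1), (2 : ℚ) ^ (i - 1) * ((s i : ℚ) + 1) =
      2 ^ (i - 1) * ((d + 2) * 2 ^ (i - 1) - if Odd i then 1 else 0) := by
    intro i hi
    rw [hs i (Finset.mem_Icc.mp hi).1]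
    split_ifs <;> push_cast <;> ring
  have hsum := three_mul_sum_Icc_two_pow_mul_sub_ite_odd ((d : ℚ) + 2) (m + 1)
  rw [← Finset.sum_congr rfl hterm] at hsum
  have hfloor : (3 * ⌊((2 ^ (m + 1) - 7 : ℚ)) / 3⌋ : ℚ) =
      2 ^ (m + 1) - 7 - if Odd (m + 1) then 1 else 0 := by
    exact_mod_cast three_mul_floor_two_pow_sub_seven_div_three (m + 1)
  rw [Nat.add_sub_cancel]
  linear_combination (1 / 2 : ℚ) * hg (m + 1) hn + (1 / 6 : ℚ) * hsum - (2 ^ m / 3 : ℚ) * hfloor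

theorem periodic_monodromy_genus (d : ℤ) (hd : 1 ≤ d) (hodd : Odd d)
    (s : ℕ → ℤ)
    (hs : ∀ i, 1 ≤ i → s i = if Odd i then (d + 2) * 2 ^ (i - 1) - 2 else (d + 2) * 2 ^ (i - 1) - 1)
    (g : ℕ → ℚ)
    (hg : ∀ n, 1 ≤ n → 2 * g n - 2 = -2 * 2 ^ n +
      ∑ i ∈ Finset.Icc 1 n, (2 : ℚ) ^ (i - 1) * ((s i : ℚ) + 1)) :
    ∀ n, 1 ≤ n → g n = (((d : ℚ) + 1) / 2) * ((2 ^ (2 * n) - 1) / 3) +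
      2 ^ (n - 1) * ((⌊((2 ^ n - 7 : ℚ)) / 3⌋ : ℤ) : ℚ) + 1 :=
  periodic_monodromy_genus_general d s hs g hg
end
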